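/- The subsequence of a balanced parenthesis sequence obtained by keeping only the parentheses belonging to a subset M of nodes of the encoded tree is itself balanced, and for marked nodes u, v, the pair of u encloses the pair of v in the restricted sequence if and only if u is an ancestor of v in the original tree. -/

import Mathlib

/-- Finite rooted ordered trees. -/
inductive RTree where
  | node : List RTree → RTree

/-- Balanced-parentheses encoding via DFS: `true` = '(' on entering a node,
`false` = ')' on leaving it. -/
def RTree.enc : RTree → List Bool
  | .node ts => true :: (ts.attach.map (fun c => RTree.enc c.1)).flatten ++ [false]
decreasing_by
  simp only [RTree.node.sizeOf_spec]
  have := List.sizeOf_lt_of_mem c.2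
  omega

/-- The subtree at a path of child indices (if it exists). -/
def RTree.subtreeAt : RTree → List ℕ → Option RTree
  | t, [] => some t
  | .node ts, i :: p =>
    match ts[i]? with
    | some c => RTree.subtreeAt c p
    | none => none

/-- The path `p` identifies a node of the tree `t`. -/
def RTree.Valid (t : RTree) (p : List ℕ) : Prop := (t.subtreeAt p).isSome

/-- Position of the opening parenthesis of the node at path `p` in `t.enc`. -/
def RTree.openPos : RTree → List ℕ → Option ℕ
  | _, [] => some 0
  | .node ts, i :: p =>
    (ts[i]?).bind fun c =>
      (RTree.openPos c p).map fun k =>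
        1 + (((ts.take i).map (fun s => s.enc.length)).sum) + k

/-- Position of the closing parenthesis of the node at path `p` in `t.enc`. -/
def RTree.closePos (t : RTree) (p : List ℕ) : Option ℕ :=
  (t.openPos p).bind fun o => (t.subtreeAt p).map fun s => o + s.enc.length - 1

/-- A sequence of parentheses (`true` = '(', `false` = ')') is balanced:
every prefix has at least as many '(' as ')' and the total counts are equal. -/
def BalancedBP (l : List Bool) : Prop :=
  (∀ pre : List Bool, pre <+: l → pre.count false ≤ pre.count true) ∧
    l.count true = l.count false

/-- `u` is a (proper) ancestor of `v`: the path `u` is a proper prefix of the path `v`. -/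
def StrictAnc (u v : List ℕ) : Prop := u <+: v ∧ u ≠ v

open scoped Classical

/-- `i` is a parenthesis position (in `t.enc`) belonging to a marked node. -/
def MarkedPos (t : RTree) (Marked : List ℕ → Prop) (i : ℕ) : Prop :=
  ∃ p : List ℕ, t.Valid p ∧ Marked p ∧ (t.openPos p = some i ∨ t.closePos p = some i)

/-- The subsequence of `t.enc` keeping only the parentheses of marked nodes. -/
noncomputable def restrictedBP (t : RTree) (Marked : List ℕ → Prop) : List Bool :=
  t.enc.zipIdx.filterMap fun ib => if MarkedPos t Marked ib.2 then some ib.1 else none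

/-- Position in the restricted sequence of the parenthesis at position `i` of `t.enc`:
the number of marked parenthesis positions strictly before `i`. -/
noncomputable def posInRestricted (t : RTree) (Marked : List ℕ → Prop) (i : ℕ) : ℕ :=
  ((Finset.range i).filter fun j => MarkedPos t Marked j).card

/-!
Every node of `t` occupies a contiguous segment of `t.enc`, which opens with its `(` and closes
with its `)`. Descending along a path shifts positions by the lengths of the preceding siblings,
so the segments of two nodes are nested when one path is a proper prefix of the other, and
disjoint otherwise. Consequently `u` is a proper ancestor of `v` exactly when the pair of `u`
encloses the pair of `v` in `t.enc`, and positions of marked parentheses keep their order in the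
restricted sequence. Sending each marked `)` to the `(` of the same node matches the closing
parentheses of any prefix injectively with earlier opening ones, and all of them bijectively
with all opening ones: the restricted sequence is balanced.
-/

lemma List.sum_map_take_add_le {α : Type*} {l : List α} (f : α → ℕ) {i j : ℕ} {x : α}
    (hx : l[i]? = some x) (hij : i < j) :
    ((l.take i).map f).sum + f x ≤ ((l.take j).map f).sum := by
  obtain ⟨hi, rfl⟩ := List.getElem?_eq_some_iff.mp hx
  rw [List.map_take, List.map_take, ← List.getElem_map f (h := by simpa using hi),
    ← List.sum_take_succ _ _ (by simpa using hi)]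
  exact List.monotone_sum_take _ hij

lemma List.exists_eq_append_cons_of_not_prefix {α : Type*} {u v : List α}
    (h₁ : ¬ u <+: v) (h₂ : ¬ v <+: u) :
    ∃ w i j a b, i ≠ j ∧ u = w ++ i :: a ∧ v = w ++ j :: b := by
  induction u generalizing v with
  | nil => exact absurd List.nil_prefix h₁
  | cons i a ih =>
    cases v with
    | nil => exact absurd List.nil_prefix h₂
    | cons j b =>
      by_cases hij : i = j
      · subst hij
        simp only [List.cons_prefix_cons, true_and] at h₁ h₂
        obtain ⟨w, i', j', a', b', hne, rfl, rfl⟩ := ih h₁ h₂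
        exact ⟨i :: w, i', j', a', b', hne, rfl, rfl⟩
      · exact ⟨[], i, j, a, b, hij, rfl, rfl⟩

lemma List.exists_prefix_of_prefix_filterMap_zipIdx {α β : Type*} {f : α × ℕ → Option β}
    {l : List α} {pre : List β} (h : pre <+: l.zipIdx.filterMap f) :
    ∃ e, e <+: l ∧ pre = e.zipIdx.filterMap f := by
  obtain ⟨L₂, hL⟩ := h
  obtain ⟨l₁, l₂, hl, rfl, -⟩ := List.filterMap_eq_append_iff.mp hL.symm
  obtain ⟨e, e', rfl, rfl, -⟩ := List.zipIdx_eq_append_iff.mp hl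
  exact ⟨e, List.prefix_append e e', rfl⟩

lemma List.IsPrefix.count_filterMap_zipIdx {α : Type*} [DecidableEq α] {e l : List α}
    (h : e <+: l) (P : ℕ → Prop) [DecidablePred P] (a : α) :
    (e.zipIdx.filterMap fun ib => if P ib.2 then some ib.1 else none).count a =
      Nat.count (fun j => P j ∧ l[j]? = some a) e.length := by
  induction e using List.reverseRecOn with
  | nil => simp
  | append_singleton e x ih =>
    have hx : l[e.length]? = some x := by obtain ⟨_, rfl⟩ := h; simp
    rw [List.zipIdx_append, List.filterMap_append, List.count_append,
      ih ((List.prefix_append e [x]).trans h), List.length_append, List.length_singleton,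
      Nat.count_succ, hx]
    by_cases hP : P e.length <;> simp [hP, List.count_singleton]

namespace RTree

lemma enc_node (ts : List RTree) :
    (node ts).enc = true :: (ts.map enc).flatten ++ [false] := by
  rw [enc]; simp

lemma two_le_length_enc (t : RTree) : 2 ≤ t.enc.length := by
  cases t with
  | node ts => simp [enc_node]

lemma length_enc_node (ts : List RTree) :
    (node ts).enc.length = (ts.map (·.enc.length)).sum + 2 := by
  simp [enc_node, List.length_flatten, Function.comp_def]

lemma subtreeAt_cons (ts : List RTree) (i : ℕ) (p : List ℕ) :
    (node ts).subtreeAt (i :: p) = ts[i]?.bind (·.subtreeAt p) := by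
  simp only [subtreeAt]; cases ts[i]? <;> rfl

variable {ts : List RTree} {t s : RTree} {i j : ℕ} {p u v : List ℕ} {o c ou cu ov cv : ℕ}

lemma openPos_cons_eq_some :
    (node ts).openPos (i :: p) = some o ↔ ∃ x o', ts[i]? = some x ∧ x.openPos p = some o' ∧
      o = 1 + ((ts.take i).map (·.enc.length)).sum + o' := by
  simp only [openPos, Option.bind_eq_some_iff, Option.map_eq_some_iff]
  grind

lemma closePos_eq_some_iff :
    t.closePos p = some c ↔
      ∃ o s, t.openPos p = some o ∧ t.subtreeAt p = some s ∧ c = o + s.enc.length - 1 := by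
  simp only [closePos, Option.bind_eq_some_iff, Option.map_eq_some_iff]
  grind

lemma closePos_cons_eq_some :
    (node ts).closePos (i :: p) = some c ↔ ∃ x c', ts[i]? = some x ∧ x.closePos p = some c' ∧
      c = 1 + ((ts.take i).map (·.enc.length)).sum + c' := by
  simp only [closePos_eq_some_iff, openPos_cons_eq_some, subtreeAt_cons, Option.bind_eq_some_iff]
  constructor
  · rintro ⟨_, s, ⟨x, o', hx, ho', rfl⟩, ⟨x', hx', hs⟩, rfl⟩
    obtain rfl : x = x' := Option.some_injective _ (hx.symm.trans hx')
    have := two_le_length_enc s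
    exact ⟨x, _, hx, ⟨o', s, ho', hs, rfl⟩, by omega⟩
  · rintro ⟨x, _, hx, ⟨o', s, ho', hs, rfl⟩, rfl⟩
    have := two_le_length_enc s
    exact ⟨_, s, ⟨x, o', hx, ho', rfl⟩, ⟨x, hx, hs⟩, by omega⟩

lemma exists_enc_eq_append_of_subtreeAt (h : t.subtreeAt p = some s) :
    ∃ A B, t.enc = A ++ s.enc ++ B ∧ t.openPos p = some A.length := by
  induction p generalizing t with
  | nil =>
    obtain rfl : t = s := Option.some_injective _ h
    exact ⟨[], [], by simp, rfl⟩
  | cons i p ih =>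
    obtain ⟨ts⟩ := t
    obtain ⟨x, hx, hs⟩ := Option.bind_eq_some_iff.mp ((subtreeAt_cons ts i p).symm.trans h)
    obtain ⟨A, B, hxAB, ho⟩ := ih hs
    have hts : ts = ts.take i ++ x :: ts.drop (i + 1) := by
      obtain ⟨hi, rfl⟩ := List.getElem?_eq_some_iff.mp hx
      rw [← List.drop_eq_getElem_cons hi, List.take_append_drop]
    refine ⟨true :: ((ts.take i).map enc).flatten ++ A,
      B ++ ((ts.drop (i + 1)).map enc).flatten ++ [false], ?_, ?_⟩
    · rw [enc_node]
      conv_lhs => rw [hts]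
      simp [hxAB]
    · refine openPos_cons_eq_some.mpr ⟨x, A.length, hx, ho, ?_⟩
      simp only [List.cons_append, List.length_cons, List.length_append, List.length_flatten,
        List.map_map, Function.comp_def]
      omega

lemma openPos_lt_closePos (ho : t.openPos p = some o) (hc : t.closePos p = some c) : o < c := by
  obtain ⟨o', s, ho', -, rfl⟩ := closePos_eq_some_iff.mp hc
  obtain rfl := Option.some_injective _ (ho.symm.trans ho')
  have := two_le_length_enc s
  omega

lemma closePos_lt_length (hc : t.closePos p = some c) : c < t.enc.length := by
  obtain ⟨o, s, ho, hs, rfl⟩ := closePos_eq_some_iff.mp hc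
  obtain ⟨A, B, henc, ho'⟩ := exists_enc_eq_append_of_subtreeAt hs
  obtain rfl := Option.some_injective _ (ho.symm.trans ho')
  have := two_le_length_enc s
  simp only [henc, List.length_append]
  omega

lemma Valid.exists_openPos_closePos (hp : t.Valid p) :
    ∃ o c, t.openPos p = some o ∧ t.closePos p = some c := by
  obtain ⟨s, hs⟩ := Option.isSome_iff_exists.mp hp
  obtain ⟨A, -, -, ho⟩ := exists_enc_eq_append_of_subtreeAt hs
  exact ⟨_, _, ho, closePos_eq_some_iff.mpr ⟨_, s, ho, hs, rfl⟩⟩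

lemma getElem?_enc_of_openPos (hp : t.Valid p) (ho : t.openPos p = some o) :
    t.enc[o]? = some true := by
  obtain ⟨s, hs⟩ := Option.isSome_iff_exists.mp hp
  obtain ⟨A, B, henc, ho'⟩ := exists_enc_eq_append_of_subtreeAt hs
  obtain rfl := Option.some_injective _ (ho.symm.trans ho')
  obtain ⟨ts⟩ := s
  simp [henc, enc_node]

lemma getElem?_enc_of_closePos (hc : t.closePos p = some c) : t.enc[c]? = some false := by
  obtain ⟨o, s, ho, hs, rfl⟩ := closePos_eq_some_iff.mp hc
  obtain ⟨A, B, henc, ho'⟩ := exists_enc_eq_append_of_subtreeAt hs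
  obtain rfl := Option.some_injective _ (ho.symm.trans ho')
  have := two_le_length_enc s
  obtain ⟨ts⟩ := s
  rw [henc, List.append_assoc, List.getElem?_append_right (by omega), enc_node]
  simp [List.length_flatten]

lemma lt_of_strictAnc (h : StrictAnc u v) (hou : t.openPos u = some ou)
    (hcu : t.closePos u = some cu) (hov : t.openPos v = some ov)
    (hcv : t.closePos v = some cv) : ou < ov ∧ cv < cu := by
  obtain ⟨⟨w, rfl⟩, hne⟩ := h
  have hw : w ≠ [] := by rintro rfl; simp at hne
  induction u generalizing t ou cu ov cv with
  | nil =>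
    obtain ⟨k, w, rfl⟩ := List.exists_cons_of_ne_nil hw
    obtain ⟨ts⟩ := t
    obtain ⟨_, s, h0, hs, rfl⟩ := closePos_eq_some_iff.mp hcu
    simp only [openPos, Option.some.injEq] at hou h0
    simp only [subtreeAt, Option.some.injEq] at hs
    subst hou h0 hs
    obtain ⟨x, ov', hx, -, rfl⟩ := openPos_cons_eq_some.mp hov
    obtain ⟨x', cv', hx', hcv', rfl⟩ := closePos_cons_eq_some.mp hcv
    obtain rfl : x = x' := Option.some_injective _ (hx.symm.trans hx')
    have := closePos_lt_length hcv'
    have := List.sum_map_take_add_le (·.enc.length) hx (List.getElem?_eq_some_iff.mp hx).1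
    rw [List.take_length] at this
    rw [length_enc_node]
    omega
  | cons k u ih =>
    obtain ⟨ts⟩ := t
    obtain ⟨x, ou', hx, hou', rfl⟩ := openPos_cons_eq_some.mp hou
    obtain ⟨x₁, cu', hx₁, hcu', rfl⟩ := closePos_cons_eq_some.mp hcu
    obtain ⟨x₂, ov', hx₂, hov', rfl⟩ := openPos_cons_eq_some.mp hov
    obtain ⟨x₃, cv', hx₃, hcv', rfl⟩ := closePos_cons_eq_some.mp hcv
    simp only [hx, Option.some.injEq] at hx₁ hx₂ hx₃
    subst hx₁ hx₂ hx₃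
    have := ih hou' hcu' hov' hcv' (by simpa using hne)
    omega

lemma closePos_lt_openPos_of_lt {w a b : List ℕ} (hij : i < j)
    (hc : t.closePos (w ++ i :: a) = some c) (ho : t.openPos (w ++ j :: b) = some o) :
    c < o := by
  induction w generalizing t c o with
  | nil =>
    obtain ⟨ts⟩ := t
    obtain ⟨x, c', hx, hc', rfl⟩ := closePos_cons_eq_some.mp hc
    obtain ⟨y, o', -, -, rfl⟩ := openPos_cons_eq_some.mp ho
    have := closePos_lt_length hc'
    have := List.sum_map_take_add_le (·.enc.length) hx hij
    omega
  | cons k w ih =>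
    obtain ⟨ts⟩ := t
    obtain ⟨x, c', hx, hc', rfl⟩ := closePos_cons_eq_some.mp hc
    obtain ⟨x', o', hx', ho', rfl⟩ := openPos_cons_eq_some.mp ho
    obtain rfl : x = x' := Option.some_injective _ (hx.symm.trans hx')
    have := ih hc' ho'
    omega

lemma strictAnc_or_strictAnc_or_disjoint (hne : u ≠ v)
    (hou : t.openPos u = some ou) (hcu : t.closePos u = some cu)
    (hov : t.openPos v = some ov) (hcv : t.closePos v = some cv) :
    StrictAnc u v ∨ StrictAnc v u ∨ cu < ov ∨ cv < ou := by
  by_cases huv : u <+: v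
  · exact Or.inl ⟨huv, hne⟩
  by_cases hvu : v <+: u
  · exact Or.inr (Or.inl ⟨hvu, hne.symm⟩)
  obtain ⟨w, i, j, a, b, hij, rfl, rfl⟩ := List.exists_eq_append_cons_of_not_prefix huv hvu
  rcases Nat.lt_or_gt_of_ne hij with h | h
  · exact Or.inr (Or.inr (Or.inl (closePos_lt_openPos_of_lt h hcu hov)))
  · exact Or.inr (Or.inr (Or.inr (closePos_lt_openPos_of_lt h hcv hou)))

lemma strictAnc_iff_lt_and_lt (hou : t.openPos u = some ou) (hcu : t.closePos u = some cu)
    (hov : t.openPos v = some ov) (hcv : t.closePos v = some cv) :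
    StrictAnc u v ↔ ou < ov ∧ cv < cu := by
  refine ⟨fun h => lt_of_strictAnc h hou hcu hov hcv, fun ⟨hlt₁, hlt₂⟩ => ?_⟩
  have hne : u ≠ v := by rintro rfl; simp [hou] at hov; omega
  have := openPos_lt_closePos hov hcv
  rcases strictAnc_or_strictAnc_or_disjoint hne hou hcu hov hcv with h | h | h | h
  · exact h
  · have := lt_of_strictAnc h hov hcv hou hcu
    omega
  all_goals omega

lemma openPos_ne_and_closePos_ne (hne : u ≠ v) (hou : t.openPos u = some ou)
    (hcu : t.closePos u = some cu) (hov : t.openPos v = some ov)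
    (hcv : t.closePos v = some cv) : ou ≠ ov ∧ cu ≠ cv := by
  have := openPos_lt_closePos hou hcu
  have := openPos_lt_closePos hov hcv
  rcases strictAnc_or_strictAnc_or_disjoint hne hou hcu hov hcv with h | h | h | h
  · have := lt_of_strictAnc h hou hcu hov hcv
    omega
  · have := lt_of_strictAnc h hov hcv hou hcu
    omega
  all_goals omega

section Marking

variable {Marked : List ℕ → Prop}

lemma exists_openPos_of_markedPos (hj : MarkedPos t Marked j) (ht : t.enc[j]? = some true) :
    ∃ p, t.Valid p ∧ Marked p ∧ t.openPos p = some j := by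
  obtain ⟨p, hv, hm, ho | hc⟩ := hj
  · exact ⟨p, hv, hm, ho⟩
  · simp [getElem?_enc_of_closePos hc] at ht

lemma exists_closePos_of_markedPos (hj : MarkedPos t Marked j) (hf : t.enc[j]? = some false) :
    ∃ p, t.Valid p ∧ Marked p ∧ t.closePos p = some j := by
  obtain ⟨p, hv, hm, ho | hc⟩ := hj
  · simp [getElem?_enc_of_openPos hv ho] at hf
  · exact ⟨p, hv, hm, hc⟩

lemma count_markedPos_false_le_true (m : ℕ) :
    Nat.count (fun j => MarkedPos t Marked j ∧ t.enc[j]? = some false) m ≤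
      Nat.count (fun j => MarkedPos t Marked j ∧ t.enc[j]? = some true) m := by
  simp only [Nat.count_eq_card_filter_range]
  refine Finset.card_le_card_of_forall_subsingleton
    (fun c o => ∃ p, t.openPos p = some o ∧ t.closePos p = some c) (fun c hc => ?_) ?_
  · simp only [Finset.mem_filter, Finset.mem_range] at hc ⊢
    obtain ⟨hcm, hmark, hf⟩ := hc
    obtain ⟨p, hv, hm, hcp⟩ := exists_closePos_of_markedPos hmark hf
    obtain ⟨o, -, hop, -⟩ := hv.exists_openPos_closePos
    have := openPos_lt_closePos hop hcp
    exact ⟨o, ⟨by omega, ⟨p, hv, hm, Or.inl hop⟩, getElem?_enc_of_openPos hv hop⟩, p, hop, hcp⟩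
  · rintro o - c₁ ⟨-, p₁, ho₁, hc₁⟩ c₂ ⟨-, p₂, ho₂, hc₂⟩
    obtain rfl : p₁ = p₂ := by_contra fun hne =>
      (openPos_ne_and_closePos_ne hne ho₁ hc₁ ho₂ hc₂).1 rfl
    exact Option.some_injective _ (hc₁.symm.trans hc₂)

lemma count_markedPos_true_le_false :
    Nat.count (fun j => MarkedPos t Marked j ∧ t.enc[j]? = some true) t.enc.length ≤
      Nat.count (fun j => MarkedPos t Marked j ∧ t.enc[j]? = some false) t.enc.length := by
  simp only [Nat.count_eq_card_filter_range]
  refine Finset.card_le_card_of_forall_subsingleton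
    (fun o c => ∃ p, t.openPos p = some o ∧ t.closePos p = some c) (fun o ho => ?_) ?_
  · simp only [Finset.mem_filter, Finset.mem_range] at ho ⊢
    obtain ⟨-, hmark, ht⟩ := ho
    obtain ⟨p, hv, hm, hop⟩ := exists_openPos_of_markedPos hmark ht
    obtain ⟨-, c, -, hcp⟩ := hv.exists_openPos_closePos
    exact ⟨c, ⟨closePos_lt_length hcp, ⟨p, hv, hm, Or.inr hcp⟩, getElem?_enc_of_closePos hcp⟩,
      p, hop, hcp⟩
  · rintro c - o₁ ⟨-, p₁, ho₁, hc₁⟩ o₂ ⟨-, p₂, ho₂, hc₂⟩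
    obtain rfl : p₁ = p₂ := by_contra fun hne =>
      (openPos_ne_and_closePos_ne hne ho₁ hc₁ ho₂ hc₂).2 rfl
    exact Option.some_injective _ (ho₁.symm.trans ho₂)

lemma balancedBP_restrictedBP (t : RTree) (Marked : List ℕ → Prop) :
    BalancedBP (restrictedBP t Marked) := by
  refine ⟨fun pre hpre => ?_, ?_⟩
  · obtain ⟨e, he, rfl⟩ := List.exists_prefix_of_prefix_filterMap_zipIdx hpre
    rw [he.count_filterMap_zipIdx, he.count_filterMap_zipIdx]
    exact count_markedPos_false_le_true _
  · rw [restrictedBP, (List.prefix_refl _).count_filterMap_zipIdx,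
      (List.prefix_refl _).count_filterMap_zipIdx]
    exact count_markedPos_true_le_false.antisymm (count_markedPos_false_le_true _)

lemma posInRestricted_lt_posInRestricted_iff (hi : MarkedPos t Marked i) :
    posInRestricted t Marked i < posInRestricted t Marked j ↔ i < j := by
  simp only [posInRestricted, ← Nat.count_eq_card_filter_range]
  exact ⟨Nat.lt_of_count_lt_count, Nat.count_strict_mono hi⟩

end Marking

end RTree

/-- The subsequence of a balanced-parentheses tree encoding keeping only the
parentheses of a subset `Marked` of nodes is itself balanced, and for marked
nodes `u, v`, the pair of `u` encloses the pair of `v` in the restricted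
sequence iff `u` is a (proper) ancestor of `v` in the original tree. -/
theorem restricted_bp_balanced_and_enclose_iff_ancestor
    (t : RTree) (Marked : List ℕ → Prop) :
    BalancedBP (restrictedBP t Marked) ∧
    ∀ (u v : List ℕ), t.Valid u → t.Valid v → Marked u → Marked v →
      ∀ ou cu ov cv : ℕ,
        t.openPos u = some ou → t.closePos u = some cu →
        t.openPos v = some ov → t.closePos v = some cv →
        ((posInRestricted t Marked ou < posInRestricted t Marked ov ∧
          posInRestricted t Marked cv < posInRestricted t Marked cu) ↔
          StrictAnc u v) := by
  refine ⟨RTree.balancedBP_restrictedBP t Marked,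
    fun u v hu hv hmu hmv ou cu ov cv hou hcu hov hcv => ?_⟩
  rw [RTree.strictAnc_iff_lt_and_lt hou hcu hov hcv,
    RTree.posInRestricted_lt_posInRestricted_iff ⟨u, hu, hmu, Or.inl hou⟩,
    RTree.posInRestricted_lt_posInRestricted_iff ⟨v, hv, hmv, Or.inr hcv⟩]
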